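/- arXiv:1401.1093 — 5 statements merged into one kernel-verified Lean document; each statement's English description precedes it below -/
import Mathlib

section
/- Let V be a finite-dimensional real vector space and B ⊆ V a closed subset that is star-shaped about the origin (i.e., for all b ∈ B and t ∈ [0,1], t•b ∈ B). If B is not compact, then there exists v ∈ V, v ≠ 0, such that the ray ℝ≥0·v is contained in B. -/
/-! Pick points `bₙ ∈ B` with `‖bₙ‖ → ∞`. Their directions `bₙ / ‖bₙ‖` lie on the unit sphere, which
is compact, so a subsequence converges to a unit vector `v`. For fixed `t ≥ 0`, star-shapedness puts
`t • (bₙ / ‖bₙ‖)` in `B` as soon as `‖bₙ‖ ≥ t`, and closedness passes this to the limit `t • v`. -/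

open Filter Topology

section Normed

variable {E : Type*} [NormedAddCommGroup E] [NormedSpace ℝ E]

lemma StarConvex.smul_normalize_mem {s : Set E} (hs : StarConvex ℝ 0 s) {b : E} (hb : b ∈ s)
    {t : ℝ} (ht : 0 ≤ t) (htb : t ≤ ‖b‖) : t • ‖b‖⁻¹ • b ∈ s := by
  rw [smul_smul]
  exact starConvex_zero_iff.1 hs hb (by positivity) (mul_inv_le_one_of_le₀ htb (norm_nonneg b))

lemma IsClosed.smul_mem_of_tendsto_normalize {ι : Type*} {l : Filter ι} [l.NeBot] {s : Set E}
    (hs : IsClosed s) (hstar : StarConvex ℝ 0 s) {b : ι → E} (hbs : ∀ i, b i ∈ s)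
    (hb : Tendsto (fun i => ‖b i‖) l atTop) {v : E}
    (hv : Tendsto (fun i => ‖b i‖⁻¹ • b i) l (𝓝 v)) {t : ℝ} (ht : 0 ≤ t) : t • v ∈ s := by
  refine hs.mem_of_tendsto (hv.const_smul t) ?_
  filter_upwards [hb.eventually_ge_atTop t] with i hi
  exact hstar.smul_normalize_mem (hbs i) ht hi

lemma exists_subseq_tendsto_normalize [ProperSpace E] {b : ℕ → E} (hb : ∀ n, b n ≠ 0) :
    ∃ v, ‖v‖ = 1 ∧ ∃ φ : ℕ → ℕ, StrictMono φ ∧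
      Tendsto (fun n => ‖b (φ n)‖⁻¹ • b (φ n)) atTop (𝓝 v) := by
  have hsphere (n : ℕ) : ‖b n‖⁻¹ • b n ∈ Metric.sphere (0 : E) 1 := by
    simp [norm_smul, hb n]
  obtain ⟨v, hv, φ, hφ, hlim⟩ := (isCompact_sphere (0 : E) 1).tendsto_subseq hsphere
  exact ⟨v, by simpa using hv, φ, hφ, hlim⟩

end Normed

/-- Let `V` be a finite-dimensional real vector space and `B ⊆ V` a closed
subset that is star-shaped about the origin.  If `B` is not compact, then there exists a
nonzero `v ∈ V` such that the ray `ℝ≥0 • v` is contained in `B`. -/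
theorem stmt_0 {V : Type*} [NormedAddCommGroup V] [NormedSpace ℝ V] [FiniteDimensional ℝ V]
    (B : Set V) (hB : IsClosed B)
    (hstar : ∀ b ∈ B, ∀ t : ℝ, t ∈ Set.Icc (0 : ℝ) 1 → t • b ∈ B)
    (hnc : ¬ IsCompact B) :
    ∃ v : V, v ≠ 0 ∧ ∀ t : ℝ, 0 ≤ t → t • v ∈ B := by
  have hstar' : StarConvex ℝ 0 B :=
    starConvex_zero_iff.2 fun b hb t ht₀ ht₁ => hstar b hb t ⟨ht₀, ht₁⟩
  have hunb : ¬ Bornology.IsBounded B := fun h => hnc (Metric.isCompact_of_isClosed_isBounded hB h)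
  have hfar (n : ℕ) : ∃ b ∈ B, (n : ℝ) < ‖b‖ := by
    simp only [isBounded_iff_forall_norm_le, not_exists, not_forall, not_le] at hunb
    simpa using hunb n
  choose b hbB hbn using hfar
  have hb : Tendsto (fun n => ‖b n‖) atTop atTop :=
    tendsto_atTop_mono (fun n => (hbn n).le) tendsto_natCast_atTop_atTop
  have hb0 (n : ℕ) : b n ≠ 0 := norm_pos_iff.1 ((Nat.cast_nonneg n).trans_lt (hbn n))
  obtain ⟨v, hv, φ, hφ, hlim⟩ := exists_subseq_tendsto_normalize hb0
  exact ⟨v, norm_ne_zero_iff.1 (hv.symm ▸ one_ne_zero),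
    fun t ht => hB.smul_mem_of_tendsto_normalize hstar' (fun n => hbB (φ n))
      (hb.comp hφ.tendsto_atTop) hlim ht⟩
end

section
/- Let V and W be finite-dimensional real vector spaces, p : V → W a linear map, and Γ ⊆ V a closed convex cone. Then the restriction of p to Γ is a proper map if and only if ker p ∩ Γ = {0}. -/
/-!
If a nonzero `x ∈ Γ` lies in `ker p`, the fibre of `p|_Γ` over `0` contains the unbounded ray
`ℝ≥0 • x`, so it is not compact. Conversely, if `ker p ∩ Γ = {0}`, then `‖p ·‖` is positive on the
compact set `Γ ∩ sphere 0 1` and so bounded below there by some `c > 0`; by homogeneity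
`c ‖x‖ ≤ ‖p x‖` on all of `Γ`, so preimages of compact sets are closed and bounded.
-/

open Set Metric Bornology

section

variable {E F : Type*} [NormedAddCommGroup E] [NormedSpace ℝ E]
  [NormedAddCommGroup F] [NormedSpace ℝ F]

lemma eq_zero_of_isBounded_of_forall_smul_mem {S : Set E} (hS : IsBounded S) {x : E}
    (hx : ∀ t : ℝ, 0 ≤ t → t • x ∈ S) : x = 0 := by
  obtain ⟨R, hR⟩ := isBounded_iff_forall_norm_le.1 hS
  by_contra hx0
  have hxpos : 0 < ‖x‖ := norm_pos_iff.2 hx0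
  have hscaled := hR _ (hx ((|R| + 1) / ‖x‖) (by positivity))
  rw [norm_smul, Real.norm_of_nonneg (by positivity), div_mul_cancel₀ _ hxpos.ne'] at hscaled
  linarith [le_abs_self R]

lemma inv_norm_smul_mem_inter_sphere {Γ : Set E} (hsmul : ∀ x ∈ Γ, ∀ t : ℝ, 0 ≤ t → t • x ∈ Γ)
    {x : E} (hx : x ∈ Γ) (hx0 : x ≠ 0) : ‖x‖⁻¹ • x ∈ Γ ∩ sphere 0 1 :=
  ⟨hsmul x hx _ (by positivity), by simp [norm_smul, hx0]⟩

lemma exists_pos_mul_norm_le_norm_apply [FiniteDimensional ℝ E] (p : E →ₗ[ℝ] F) {Γ : Set E}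
    (hΓ : IsClosed Γ) (hsmul : ∀ x ∈ Γ, ∀ t : ℝ, 0 ≤ t → t • x ∈ Γ)
    (hker : ∀ x ∈ Γ, p x = 0 → x = 0) : ∃ c > 0, ∀ x ∈ Γ, c * ‖x‖ ≤ ‖p x‖ := by
  have hpos : ∀ z ∈ Γ ∩ sphere (0 : E) 1, 0 < ‖p z‖ := fun z hz =>
    norm_pos_iff.2 fun hpz => by simpa [hker z hz.1 hpz] using hz.2
  obtain ⟨c, hc, hbound⟩ := ((isCompact_sphere (0 : E) 1).inter_left hΓ).exists_forall_le'
    p.continuous_of_finiteDimensional.norm.continuousOn hpos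
  refine ⟨c, hc, fun x hx => ?_⟩
  rcases eq_or_ne x 0 with rfl | hx0
  · simp
  have hxpos : 0 < ‖x‖ := norm_pos_iff.2 hx0
  have hunit := hbound _ (inv_norm_smul_mem_inter_sphere hsmul hx hx0)
  rw [map_smul, norm_smul, Real.norm_of_nonneg (by positivity), inv_mul_eq_div,
    le_div_iff₀ hxpos] at hunit
  exact hunit

lemma isProperMap_restrict_of_mul_norm_le [FiniteDimensional ℝ E] (p : E →ₗ[ℝ] F) {Γ : Set E}
    (hΓ : IsClosed Γ) {c : ℝ} (hc : 0 < c) (hbound : ∀ x ∈ Γ, c * ‖x‖ ≤ ‖p x‖) :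
    IsProperMap (fun x : Γ => p x) := by
  have hp : Continuous p := p.continuous_of_finiteDimensional
  refine isProperMap_iff_isCompact_preimage.2 ⟨hp.comp continuous_subtype_val, fun K hK => ?_⟩
  obtain ⟨M, hM⟩ := isBounded_iff_forall_norm_le.1 hK.isBounded
  have himage : ((↑) '' ((fun x : Γ => p x) ⁻¹' K) : Set E) = Γ ∩ p ⁻¹' K := by
    ext x
    simp [and_comm]
  have hbdd : IsBounded (Γ ∩ p ⁻¹' K) := isBounded_iff_forall_norm_le.2
    ⟨M / c, fun x hx => (le_div_iff₀' hc).2 ((hbound x hx.1).trans (hM _ hx.2))⟩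
  rw [Subtype.isCompact_iff, himage]
  exact isCompact_of_isClosed_isBounded (hΓ.inter (hK.isClosed.preimage hp)) hbdd

end

theorem stmt_1_general {V W : Type*} [NormedAddCommGroup V] [NormedSpace ℝ V] [FiniteDimensional ℝ V]
    [NormedAddCommGroup W] [NormedSpace ℝ W] [FiniteDimensional ℝ W]
    (p : V →ₗ[ℝ] W) (Γ : Set V) (hΓ : IsClosed Γ) (h0 : (0 : V) ∈ Γ)
    (hsmul : ∀ x ∈ Γ, ∀ t : ℝ, 0 ≤ t → t • x ∈ Γ) :
    IsProperMap (fun x : Γ => p x) ↔ (LinearMap.ker p : Set V) ∩ Γ = {0} := by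
  constructor
  · intro hprop
    have hfiber : IsBounded ((↑) '' ((fun x : Γ => p x) ⁻¹' {0}) : Set V) :=
      ((hprop.isCompact_preimage isCompact_singleton).image continuous_subtype_val).isBounded
    refine Subset.antisymm (fun x ⟨hxker, hx⟩ => ?_) ?_
    · refine eq_zero_of_isBounded_of_forall_smul_mem hfiber fun t ht => ?_
      exact ⟨⟨t • x, hsmul x hx t ht⟩, by simp [LinearMap.mem_ker.1 hxker], rfl⟩
    · rintro _ rfl
      exact ⟨(LinearMap.ker p).zero_mem, h0⟩
  · intro hker
    obtain ⟨c, hc, hbound⟩ := exists_pos_mul_norm_le_norm_apply p hΓ hsmul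
      fun x hx hpx => hker.subset ⟨hpx, hx⟩
    exact isProperMap_restrict_of_mul_norm_le p hΓ hc hbound

/-- Let `V, W` be finite-dimensional real vector spaces, `p : V → W` linear and
`Γ ⊆ V` a closed convex cone.  Then `p` restricted to `Γ` is a proper map if and only if
`ker p ∩ Γ = {0}`. -/
theorem stmt_1 {V W : Type*} [NormedAddCommGroup V] [NormedSpace ℝ V] [FiniteDimensional ℝ V]
    [NormedAddCommGroup W] [NormedSpace ℝ W] [FiniteDimensional ℝ W]
    (p : V →ₗ[ℝ] W) (Γ : Set V) (hΓ : IsClosed Γ) (h0 : (0 : V) ∈ Γ)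
    (hadd : ∀ x ∈ Γ, ∀ y ∈ Γ, x + y ∈ Γ)
    (hsmul : ∀ x ∈ Γ, ∀ t : ℝ, 0 ≤ t → t • x ∈ Γ) :
    IsProperMap (fun x : Γ => p x) ↔ (LinearMap.ker p : Set V) ∩ Γ = {0} :=
  stmt_1_general p Γ hΓ h0 hsmul
end

section
/- Let Σ be a root system in a Euclidean space 𝔞* with an involutive automorphism σ, let Σ⁺ be a positive system, and suppose {α ∈ Σ⁺ : σα ∈ Σ⁺} is properly contained in Σ⁺ \ 𝔞_q*, where 𝔞_q* is the −1 eigenspace of σ on 𝔞*. Then there exists a simple root α of Σ⁺ with −σα ∈ Σ⁺ and α ∉ 𝔞_q* (i.e., σα ≠ −α). -/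
/-!
Pick `X` with `⟪α, X⟫ > 0` on `P` and put `f ξ = ⟪ξ + σ ξ, X⟫`, so that `f ∘ σ = f`. If the theorem
failed, every simple root `γ` would either satisfy `σ γ ∈ P`, whence `f γ > 0`, or `σ γ = -γ`,
whence `f γ = 0`. As the simple roots generate `P`, `f ≥ 0` on `P` with equality only on the
`-1`-eigenspace of `σ`. Properness gives `β ∈ P` with `σ β ≠ -β` and `-σ β ∈ P`; then `f β ≥ 0`
and `f (-σ β) = -f β ≥ 0` force `f β = 0`, a contradiction.
-/

open RealInnerProductSpace

theorem AddSubmonoid.nonneg_and_mem_of_mem_closure {M R : Type*} [AddCommMonoid M]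
    [AddCommMonoid R] [PartialOrder R] [IsOrderedAddMonoid R] (f : M →+ R) (N : AddSubmonoid M)
    {s : Set M} (hs : ∀ x ∈ s, 0 ≤ f x ∧ (f x = 0 → x ∈ N)) {x : M}
    (hx : x ∈ AddSubmonoid.closure s) : 0 ≤ f x ∧ (f x = 0 → x ∈ N) := by
  induction hx using AddSubmonoid.closure_induction with
  | mem x hx => exact hs x hx
  | zero => exact ⟨by simp, fun _ => N.zero_mem⟩
  | add x y _ _ ihx ihy =>
    rw [map_add]
    refine ⟨add_nonneg ihx.1 ihy.1, fun h => ?_⟩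
    obtain ⟨hfx, hfy⟩ := (add_eq_zero_iff_of_nonneg ihx.1 ihy.1).mp h
    exact N.add_mem (ihx.2 hfx) (ihy.2 hfy)

theorem inner_add_map_nonneg_and_eq_neg_of_mem_closure {E : Type*} [NormedAddCommGroup E]
    [InnerProductSpace ℝ E] {σ : E →ₗ[ℝ] E} {P s : Set E} {X : E} (hsP : s ⊆ P)
    (hX : ∀ α ∈ P, 0 < ⟪α, X⟫) (hs : ∀ γ ∈ s, σ γ ∈ P ∨ σ γ = -γ) {α : E}
    (hα : α ∈ AddSubmonoid.closure s) :
    0 ≤ ⟪α + σ α, X⟫ ∧ (⟪α + σ α, X⟫ = 0 → σ α = -α) := by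
  let f : E →+ ℝ := ((innerₛₗ ℝ X).comp (LinearMap.id + σ)).toAddMonoidHom
  have hf : ∀ ξ, f ξ = ⟪ξ + σ ξ, X⟫ := fun ξ => real_inner_comm _ _
  have hq : ∀ ξ, ξ ∈ Module.End.eigenspace σ (-1) ↔ σ ξ = -ξ := fun ξ => by
    rw [Module.End.mem_eigenspace_iff, neg_one_smul]
  simp only [← hf, ← hq]
  refine AddSubmonoid.nonneg_and_mem_of_mem_closure f (Module.End.eigenspace σ (-1)).toAddSubmonoid
    (fun γ hγ => ?_) hα
  rcases hs γ hγ with hσγ | hσγ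
  · have hfγ : 0 < f γ := by
      rw [hf, inner_add_left]
      exact add_pos (hX γ (hsP hγ)) (hX _ hσγ)
    exact ⟨hfγ.le, fun h => absurd h hfγ.ne'⟩
  · exact ⟨by simp [hf, hσγ], fun _ => (hq γ).mpr hσγ⟩

theorem stmt_8_general {E : Type*} [NormedAddCommGroup E] [InnerProductSpace ℝ E]
    (Rt : Set E)
    (σ : E →ₗ[ℝ] E) (hinv : ∀ v, σ (σ v) = v)
    (hσRt : ∀ α ∈ Rt, σ α ∈ Rt)
    (P : Set E) (hPRt : P ⊆ Rt)
    (hpos : ∀ α ∈ Rt, Xor' (α ∈ P) (-α ∈ P))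
    (hreg : ∃ X : E, ∀ α ∈ P, 0 < ⟪α, X⟫)
    (hgen : ∀ α ∈ P, α ∈ AddSubmonoid.closure {β | β ∈ P ∧ ¬ ∃ γ ∈ P, ∃ δ ∈ P, β = γ + δ})
    (hproper : {α ∈ P | σ α ∈ P} ⊂ P \ {ξ | σ ξ = -ξ}) :
    ∃ α ∈ P, (¬ ∃ γ ∈ P, ∃ δ ∈ P, α = γ + δ) ∧ -σ α ∈ P ∧ σ α ≠ -α := by
  obtain ⟨X, hX⟩ := hreg
  by_contra hcon
  have hnegσ : ∀ α ∈ P, σ α ∉ P → -σ α ∈ P := fun α hα h =>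
    (Xor.or (hpos _ (hσRt α (hPRt hα)))).resolve_left h
  have hsimple : ∀ γ ∈ {β | β ∈ P ∧ ¬ ∃ γ ∈ P, ∃ δ ∈ P, β = γ + δ}, σ γ ∈ P ∨ σ γ = -γ :=
    fun γ ⟨hγP, hγsimple⟩ => or_iff_not_imp_left.mpr fun hσγ =>
      by_contra fun hne => hcon ⟨γ, hγP, hγsimple, hnegσ γ hγP hσγ, hne⟩
  obtain ⟨β, ⟨hβP, hβq⟩, hβ⟩ := Set.not_subset.mp hproper.2
  have hσβ : σ β ∉ P := fun h => hβ ⟨hβP, h⟩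
  have hfβ := inner_add_map_nonneg_and_eq_neg_of_mem_closure (fun _ h => h.1) hX hsimple
    (hgen β hβP)
  have hfσβ := inner_add_map_nonneg_and_eq_neg_of_mem_closure (fun _ h => h.1) hX hsimple
    (hgen _ (hnegσ β hβP hσβ))
  have hflip : ⟪-σ β + σ (-σ β), X⟫ = -⟪β + σ β, X⟫ := by
    rw [map_neg, hinv, ← neg_add, add_comm, inner_neg_left]
  rw [hflip, neg_nonneg] at hfσβ
  exact hβq (hfβ.2 (le_antisymm hfσβ.1 hfβ.1))

/-- Let `Rt` be a root system in a Euclidean space with an involutive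
(self-adjoint) automorphism `σ`, `P` a positive system, and suppose
`{α ∈ P : σα ∈ P}` is properly contained in `P \ 𝔞_q*`, where `𝔞_q* = {ξ : σξ = -ξ}`.
Then there is a `P`-simple root `α` (not a sum of two positive roots) with `-σα ∈ P` and
`σα ≠ -α`. -/
theorem stmt_8 {E : Type*} [NormedAddCommGroup E] [InnerProductSpace ℝ E]
    [FiniteDimensional ℝ E]
    (Rt : Set E) (hfin : Rt.Finite) (h0 : (0 : E) ∉ Rt) (hneg : ∀ α ∈ Rt, -α ∈ Rt)
    (σ : E →ₗ[ℝ] E) (hinv : ∀ v, σ (σ v) = v)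
    (hsa : ∀ u v : E, ⟪σ u, v⟫ = ⟪u, σ v⟫)
    (hσRt : ∀ α ∈ Rt, σ α ∈ Rt)
    (P : Set E) (hPRt : P ⊆ Rt)
    (hpos : ∀ α ∈ Rt, Xor' (α ∈ P) (-α ∈ P))
    (hreg : ∃ X : E, ∀ α ∈ P, 0 < ⟪α, X⟫)
    (hgen : ∀ α ∈ P, α ∈ AddSubmonoid.closure {β | β ∈ P ∧ ¬ ∃ γ ∈ P, ∃ δ ∈ P, β = γ + δ})
    (hproper : {α ∈ P | σ α ∈ P} ⊂ P \ {ξ | σ ξ = -ξ}) :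
    ∃ α ∈ P, (¬ ∃ γ ∈ P, ∃ δ ∈ P, α = γ + δ) ∧ -σ α ∈ P ∧ σ α ≠ -α :=
  stmt_8_general Rt σ hinv hσRt P hPRt hpos hreg hgen hproper
end

section
/- Let Σ(P,σ) = {α ∈ Σ(P) : σα ∈ Σ(P)} and let Z_q ∈ 𝔞_q^reg satisfy α(Z_q) > 0 for all α ∈ Σ(P,σθ). Put Σ(P,σ,+) = {α ∈ Σ(P,σ) : α(Z_q) > 0} and 𝔫_{P,σ,+} = ⊕_{α ∈ Σ(P,σ,+)} 𝔤_α, and let 𝔫_{P,σ} = ⊕_{α ∈ Σ(P,σ)} 𝔤_α. Then: (a) 𝔫_{P,σ,+} is a subalgebra of 𝔫_{P,σ}; and (c) 𝔫_{P,σ} = 𝔫_{P,σ,+} ⊕ (𝔫_P ∩ 𝔥). -/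
/-!
The decomposition is a statement about an independent family of subspaces `g α` permuted by
the involution `σ` (acting on indices by `α ↦ α ∘ σ`) and the function `α ↦ α(Z_q)`, which `σ`
makes odd. A `σ`-fixed vector of `⨆_{α ∈ s} g α` also lies in `⨆_{α ∈ σ s} g α`, hence, by
independence and modularity, in `⨆_{α ∈ s ∩ σ s} g α`. This gives `𝔫_P ∩ 𝔥 ⊆ 𝔫_{P,σ}` and, as `σ`
reverses the sign of `α(Z_q)`, `𝔫_{P,σ,+} ∩ 𝔥 = 0`. Conversely, a root space of `𝔫_{P,σ}` lies in
`𝔥` when `α(Z_q) = 0` (regularity), in `𝔫_{P,σ,+}` when `α(Z_q) > 0`, and when `α(Z_q) < 0` one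
writes `X = (X + σX) - σX`. For the subalgebra property: a sum of two roots of `Σ(P,σ,+)` is
positive at `Z_q`, so it is either again in `Σ(P,σ,+)` or not a root and its space vanishes.
-/

open Function
open LinearMap (ker)

lemma iSupIndep.biSup_inf_biSup {ι α : Type*} [CompleteLattice α] [IsModularLattice α]
    [IsCompactlyGenerated α] {f : ι → α} (hf : iSupIndep f) (s t : Set ι) :
    (⨆ i ∈ s, f i) ⊓ (⨆ i ∈ t, f i) = ⨆ i ∈ s ∩ t, f i := by
  have hsplit : ⨆ i ∈ s, f i = (⨆ i ∈ s ∩ t, f i) ⊔ ⨆ i ∈ s \ t, f i := by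
    rw [← iSup_union, Set.inter_union_sdiff]
  rw [hsplit, sup_inf_assoc_of_le _ (biSup_mono fun i hi => hi.2),
    (hf.disjoint_biSup_biSup Set.disjoint_sdiff_left).eq_bot, sup_bot_eq]

namespace Submodule

lemma lie_mem_biSup {ι R L : Type*} [CommRing R] [LieRing L] [LieAlgebra R L] [Add ι]
    {g : ι → Submodule R L} (hbracket : ∀ i j, ∀ x ∈ g i, ∀ y ∈ g j, ⁅x, y⁆ ∈ g (i + j))
    {s : Set ι} (hs : ∀ i ∈ s, ∀ j ∈ s, g (i + j) ≤ ⨆ k ∈ s, g k) {x y : L}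
    (hx : x ∈ ⨆ i ∈ s, g i) (hy : y ∈ ⨆ i ∈ s, g i) : ⁅x, y⁆ ∈ ⨆ i ∈ s, g i := by
  let B : L →ₗ[R] L →ₗ[R] L := LieModule.toEnd R L L
  have hB : map₂ B (⨆ i ∈ s, g i) (⨆ i ∈ s, g i) ≤ ⨆ i ∈ s, g i := by
    simp only [map₂_iSup_left, map₂_iSup_right]
    exact iSup₂_le fun j hj => iSup₂_le fun i hi =>
      map₂_le.mpr fun x hx y hy => hs i hi j hj (hbracket i j x hx y hy)
  exact hB (apply_mem_map₂ B hx hy)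

variable {ι R M : Type*} [Ring R] [AddCommGroup M] [Module R M]

lemma mem_sup_inf_ker_sub_id {f : M →ₗ[R] M} (hf : ∀ x, f (f x) = x) {U N : Submodule R M}
    {x : M} (hxN : x ∈ N) (hfxN : f x ∈ N) (hfxU : f x ∈ U) :
    x ∈ U ⊔ (N ⊓ ker (f - LinearMap.id)) := by
  have hfix : x + f x ∈ N ⊓ ker (f - LinearMap.id) :=
    ⟨add_mem hxN hfxN, by simp [hf, add_comm]⟩
  simpa using add_mem (mem_sup_right hfix) (mem_sup_left (neg_mem hfxU))

lemma biSup_inf_ker_sub_id_le {g : ι → Submodule R M} (hg : iSupIndep g) {f : M →ₗ[R] M}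
    {τ : ι → ι} (hmap : ∀ i, (g i).map f ≤ g (τ i)) (s : Set ι) :
    (⨆ i ∈ s, g i) ⊓ ker (f - LinearMap.id) ≤ ⨆ i ∈ s ∩ τ '' s, g i := by
  rintro x ⟨hx, hfx⟩
  replace hfx : f x = x := by simpa [sub_eq_zero] using hfx
  have hmap_biSup : (⨆ i ∈ s, g i).map f ≤ ⨆ i ∈ τ '' s, g i := by
    simp only [map_iSup]
    exact iSup₂_le fun i hi => (hmap i).trans (le_biSup g (Set.mem_image_of_mem τ hi))
  rw [← hg.biSup_inf_biSup]
  exact ⟨hx, hfx ▸ hmap_biSup (mem_map_of_mem hx)⟩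

section OddWeight

variable {Γ : Type*} [AddCommGroup Γ] [LinearOrder Γ] [IsOrderedAddMonoid Γ]
  {g : ι → Submodule R M} {f : M →ₗ[R] M} {τ : ι → ι} {v : ι → Γ}

lemma biSup_le_sup_inf_ker_sub_id (hf : ∀ x, f (f x) = x) (hτ : Involutive τ)
    (hmap : ∀ i, (g i).map f ≤ g (τ i)) (hv : ∀ i, v (τ i) = -v i) {P : Set ι}
    (hzero : ∀ i ∈ P, v i = 0 → g i ≤ ker (f - LinearMap.id)) :
    ⨆ i ∈ {i | i ∈ P ∧ τ i ∈ P}, g i ≤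
      (⨆ i ∈ {i | i ∈ P ∧ τ i ∈ P ∧ 0 < v i}, g i) ⊔
        ((⨆ i ∈ P, g i) ⊓ ker (f - LinearMap.id)) := by
  refine iSup₂_le fun i ⟨hiP, hτiP⟩ => ?_
  rcases lt_trichotomy (v i) 0 with hneg | hvi | hpos
  · intro x hx
    have hfx : f x ∈ g (τ i) := hmap i (mem_map_of_mem hx)
    have hτi_pos : τ i ∈ {i | i ∈ P ∧ τ i ∈ P ∧ 0 < v i} :=
      ⟨hτiP, (hτ i).symm ▸ hiP, hv i ▸ neg_pos.mpr hneg⟩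
    exact mem_sup_inf_ker_sub_id hf (le_biSup g hiP hx) (le_biSup g hτiP hfx)
      (le_biSup g hτi_pos hfx)
  · exact le_sup_of_le_right (le_inf (le_biSup g hiP) (hzero i hiP hvi))
  · have hi_pos : i ∈ {i | i ∈ P ∧ τ i ∈ P ∧ 0 < v i} := ⟨hiP, hτiP, hpos⟩
    exact le_sup_of_le_left (le_biSup g hi_pos)

lemma biSup_eq_sup_inf_ker_sub_id (hg : iSupIndep g) (hf : ∀ x, f (f x) = x)
    (hτ : Involutive τ) (hmap : ∀ i, (g i).map f ≤ g (τ i)) (hv : ∀ i, v (τ i) = -v i)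
    {P : Set ι} (hzero : ∀ i ∈ P, v i = 0 → g i ≤ ker (f - LinearMap.id)) :
    ⨆ i ∈ {i | i ∈ P ∧ τ i ∈ P}, g i =
      (⨆ i ∈ {i | i ∈ P ∧ τ i ∈ P ∧ 0 < v i}, g i) ⊔
        ((⨆ i ∈ P, g i) ⊓ ker (f - LinearMap.id)) := by
  refine le_antisymm (biSup_le_sup_inf_ker_sub_id hf hτ hmap hv hzero) (sup_le ?_ ?_)
  · exact biSup_mono fun i hi => ⟨hi.1, hi.2.1⟩
  · refine (biSup_inf_ker_sub_id_le hg hmap P).trans (biSup_mono ?_)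
    rintro i ⟨hi, j, hj, rfl⟩
    exact ⟨hi, (hτ j).symm ▸ hj⟩

lemma biSup_inf_ker_sub_id_eq_bot_of_pos (hg : iSupIndep g)
    (hmap : ∀ i, (g i).map f ≤ g (τ i)) (hv : ∀ i, v (τ i) = -v i) {s : Set ι}
    (hs : ∀ i ∈ s, 0 < v i) :
    (⨆ i ∈ s, g i) ⊓ ker (f - LinearMap.id) = ⊥ := by
  have hdisj : s ∩ τ '' s = ∅ := Set.eq_empty_of_forall_notMem fun i ⟨hi, j, hj, hji⟩ =>
    (hs i hi).not_gt (hji ▸ (hv j).symm ▸ neg_neg_of_pos (hs j hj))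
  refine eq_bot_iff.mpr ((biSup_inf_ker_sub_id_le hg hmap s).trans ?_)
  simp [hdisj]

end OddWeight

end Submodule

theorem stmt_14_general {L A : Type*} [LieRing L] [LieAlgebra ℝ L]
    [AddCommGroup A] [Module ℝ A]
    (Rt : Finset (A →ₗ[ℝ] ℝ))
    (g : (A →ₗ[ℝ] ℝ) → Submodule ℝ L)
    (hbracket : ∀ α β : A →ₗ[ℝ] ℝ, ∀ x ∈ g α, ∀ y ∈ g β, ⁅x, y⁆ ∈ g (α + β))
    (hbot : ∀ γ : A →ₗ[ℝ] ℝ, γ ∉ (Rt : Set (A →ₗ[ℝ] ℝ)) → γ ≠ 0 → g γ = ⊥)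
    (hind : iSupIndep g)
    (σA : A ≃ₗ[ℝ] A) (hσAinv : ∀ a, σA (σA a) = a)
    (σL : L ≃ₗ[ℝ] L) (hσLinv : ∀ x, σL (σL x) = x)
    (hσRt : ∀ α ∈ Rt, (α.comp (σA : A →ₗ[ℝ] A)) ∈ Rt)
    (hσg : ∀ α : A →ₗ[ℝ] ℝ,
      Submodule.map (σL : L →ₗ[ℝ] L) (g α) = g (α.comp (σA : A →ₗ[ℝ] A)))
    (P : Finset (A →ₗ[ℝ] ℝ)) (hP : P ⊆ Rt)
    (hPadd : ∀ α ∈ P, ∀ β ∈ P, α + β ∈ Rt → α + β ∈ P)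
    (Zq : A) (hZq : σA Zq = -Zq)
    (hreg : ∀ α ∈ Rt, α Zq = 0 → ∀ X : A, σA X = -X → α X = 0)
    (hfix : ∀ α ∈ Rt, (∀ X : A, σA X = -X → α X = 0) → ∀ x ∈ g α, σL x = x) :
    (∀ x ∈ (⨆ α ∈ {α : A →ₗ[ℝ] ℝ | α ∈ P ∧ α.comp (σA : A →ₗ[ℝ] A) ∈ P ∧ 0 < α Zq}, g α),
     ∀ y ∈ (⨆ α ∈ {α : A →ₗ[ℝ] ℝ | α ∈ P ∧ α.comp (σA : A →ₗ[ℝ] A) ∈ P ∧ 0 < α Zq}, g α),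
      ⁅x, y⁆ ∈ (⨆ α ∈ {α : A →ₗ[ℝ] ℝ | α ∈ P ∧ α.comp (σA : A →ₗ[ℝ] A) ∈ P ∧ 0 < α Zq}, g α)) ∧
    (⨆ α ∈ {α : A →ₗ[ℝ] ℝ | α ∈ P ∧ α.comp (σA : A →ₗ[ℝ] A) ∈ P}, g α)
      = (⨆ α ∈ {α : A →ₗ[ℝ] ℝ | α ∈ P ∧ α.comp (σA : A →ₗ[ℝ] A) ∈ P ∧ 0 < α Zq}, g α)
        ⊔ ((⨆ α ∈ (P : Set (A →ₗ[ℝ] ℝ)), g α)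
            ⊓ LinearMap.ker ((σL : L →ₗ[ℝ] L) - LinearMap.id)) ∧
    (⨆ α ∈ {α : A →ₗ[ℝ] ℝ | α ∈ P ∧ α.comp (σA : A →ₗ[ℝ] A) ∈ P ∧ 0 < α Zq}, g α)
      ⊓ ((⨆ α ∈ (P : Set (A →ₗ[ℝ] ℝ)), g α)
          ⊓ LinearMap.ker ((σL : L →ₗ[ℝ] L) - LinearMap.id)) = ⊥ := by
  have hτ : Involutive fun α : A →ₗ[ℝ] ℝ => α.comp (σA : A →ₗ[ℝ] A) :=
    fun α => by ext a; simp [hσAinv]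
  have hmap : ∀ α, (g α).map (σL : L →ₗ[ℝ] L) ≤ g (α.comp (σA : A →ₗ[ℝ] A)) :=
    fun α => (hσg α).le
  have hv : ∀ α : A →ₗ[ℝ] ℝ, α.comp (σA : A →ₗ[ℝ] A) Zq = -α Zq := fun α => by simp [hZq]
  have hzero : ∀ α ∈ (P : Set (A →ₗ[ℝ] ℝ)), α Zq = 0 →
      g α ≤ LinearMap.ker ((σL : L →ₗ[ℝ] L) - LinearMap.id) := fun α hα hαZ x hx => by
    simpa [sub_eq_zero] using hfix α (hP hα) (hreg α (hP hα) hαZ) x hx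
  refine ⟨fun x hx y hy => Submodule.lie_mem_biSup hbracket ?_ hx hy,
    Submodule.biSup_eq_sup_inf_ker_sub_id hind hσLinv hτ hmap hv hzero,
    eq_bot_iff.mpr ?_⟩
  · rintro α ⟨hαP, hτα, hαZ⟩ β ⟨hβP, hτβ, hβZ⟩
    have hsumZ : 0 < (α + β) Zq := add_pos hαZ hβZ
    by_cases hrt : α + β ∈ Rt
    · refine le_biSup g ⟨hPadd α hαP β hβP hrt, ?_, hsumZ⟩
      have hτrt := hσRt _ hrt
      rw [LinearMap.add_comp] at hτrt ⊢
      exact hPadd _ hτα _ hτβ hτrt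
    · rw [hbot _ hrt (fun h => hsumZ.ne' (by simp [h]))]
      exact bot_le
  · exact (inf_le_inf_left _ inf_le_right).trans_eq
      (Submodule.biSup_inf_ker_sub_id_eq_bot_of_pos hind hmap hv fun α hα => hα.2.2)

/-- Setting: `L = 𝔤` a real Lie algebra with restricted-root-space
decomposition `g α` over the roots `Rt = Σ(𝔤,𝔞)` of `𝔞 = A`; `σA`, `σL` the compatible linear
involutions of `𝔞` and `𝔤` (`σ` acts on roots by `α ↦ α ∘ σA`); `𝔥 = {x : σL x = x}`;
`P = Σ(P)` a positive system; `Z_q ∈ 𝔞_q` regular with `α(Z_q) > 0` for all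
`α ∈ Σ(P,σθ) = {α ∈ P : -σα ∈ P}`.  Put `Σ(P,σ) = {α ∈ P : σα ∈ P}` and
`Σ(P,σ,+) = {α ∈ Σ(P,σ) : α(Z_q) > 0}`, with root-space sums `𝔫_{P,σ}`, `𝔫_{P,σ,+}` and
`𝔫_P = ⊕_{α ∈ P} g α`.  Then: (a) `𝔫_{P,σ,+}` is a subalgebra of `𝔫_{P,σ}`, and
(c) `𝔫_{P,σ} = 𝔫_{P,σ,+} ⊕ (𝔫_P ∩ 𝔥)`. -/
theorem stmt_14 {L A : Type*} [LieRing L] [LieAlgebra ℝ L]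
    [AddCommGroup A] [Module ℝ A]
    (Rt : Finset (A →ₗ[ℝ] ℝ))
    (g : (A →ₗ[ℝ] ℝ) → Submodule ℝ L)
    (hbracket : ∀ α β : A →ₗ[ℝ] ℝ, ∀ x ∈ g α, ∀ y ∈ g β, ⁅x, y⁆ ∈ g (α + β))
    (hbot : ∀ γ : A →ₗ[ℝ] ℝ, γ ∉ (Rt : Set (A →ₗ[ℝ] ℝ)) → γ ≠ 0 → g γ = ⊥)
    (hind : iSupIndep g)
    (σA : A ≃ₗ[ℝ] A) (hσAinv : ∀ a, σA (σA a) = a)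
    (σL : L ≃ₗ[ℝ] L) (hσLinv : ∀ x, σL (σL x) = x)
    (hσbr : ∀ x y : L, σL ⁅x, y⁆ = ⁅σL x, σL y⁆)
    (hσRt : ∀ α ∈ Rt, (α.comp (σA : A →ₗ[ℝ] A)) ∈ Rt)
    (hσg : ∀ α : A →ₗ[ℝ] ℝ,
      Submodule.map (σL : L →ₗ[ℝ] L) (g α) = g (α.comp (σA : A →ₗ[ℝ] A)))
    (P : Finset (A →ₗ[ℝ] ℝ)) (hP : P ⊆ Rt)
    (hxor : ∀ α ∈ Rt, Xor' (α ∈ P) (-α ∈ P))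
    (hPadd : ∀ α ∈ P, ∀ β ∈ P, α + β ∈ Rt → α + β ∈ P)
    (Zq : A) (hZq : σA Zq = -Zq)
    (hreg : ∀ α ∈ Rt, α Zq = 0 → ∀ X : A, σA X = -X → α X = 0)
    (hfix : ∀ α ∈ Rt, (∀ X : A, σA X = -X → α X = 0) → ∀ x ∈ g α, σL x = x)
    (hZpos : ∀ α ∈ P, -(α.comp (σA : A →ₗ[ℝ] A)) ∈ P → 0 < α Zq) :
    (∀ x ∈ (⨆ α ∈ {α : A →ₗ[ℝ] ℝ | α ∈ P ∧ α.comp (σA : A →ₗ[ℝ] A) ∈ P ∧ 0 < α Zq}, g α),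
     ∀ y ∈ (⨆ α ∈ {α : A →ₗ[ℝ] ℝ | α ∈ P ∧ α.comp (σA : A →ₗ[ℝ] A) ∈ P ∧ 0 < α Zq}, g α),
      ⁅x, y⁆ ∈ (⨆ α ∈ {α : A →ₗ[ℝ] ℝ | α ∈ P ∧ α.comp (σA : A →ₗ[ℝ] A) ∈ P ∧ 0 < α Zq}, g α)) ∧
    (⨆ α ∈ {α : A →ₗ[ℝ] ℝ | α ∈ P ∧ α.comp (σA : A →ₗ[ℝ] A) ∈ P}, g α)
      = (⨆ α ∈ {α : A →ₗ[ℝ] ℝ | α ∈ P ∧ α.comp (σA : A →ₗ[ℝ] A) ∈ P ∧ 0 < α Zq}, g α)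
        ⊔ ((⨆ α ∈ (P : Set (A →ₗ[ℝ] ℝ)), g α)
            ⊓ LinearMap.ker ((σL : L →ₗ[ℝ] L) - LinearMap.id)) ∧
    (⨆ α ∈ {α : A →ₗ[ℝ] ℝ | α ∈ P ∧ α.comp (σA : A →ₗ[ℝ] A) ∈ P ∧ 0 < α Zq}, g α)
      ⊓ ((⨆ α ∈ (P : Set (A →ₗ[ℝ] ℝ)), g α)
          ⊓ LinearMap.ker ((σL : L →ₗ[ℝ] L) - LinearMap.id)) = ⊥ :=
  stmt_14_general Rt g hbracket hbot hind σA hσAinv σL hσLinv hσRt hσg P hP hPadd Zq hZq hreg hfix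
end

section
/- Let P ∈ 𝒫(A) and let Γ_𝔞(Σ(P,σθ)) = Σ_{α ∈ Σ(P,σθ)} ℝ≥0 H_α be the cone in 𝔞 generated by the coroot-type vectors H_α for α ∈ Σ(P,σθ). Then Γ_𝔞(Σ(P,σθ)) ∩ 𝔞_h = {0}, and consequently the restriction of the projection pr_q : 𝔞 → 𝔞_q to Γ_𝔞(Σ(P,σθ)) is a proper map. -/
open RealInnerProductSpace

/-!
The vector `X = Y - σY` lies in the `-1` eigenspace `𝔞_q`, so `⟪X, ·⟫` vanishes on `𝔞_h` and is
unchanged by `pr_q`. For `α ∈ Σ(P,σθ)` both `α` and `-σα` are positive on `Y`, which makes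
`⟪X, H_α⟫ = (2/⟪α,α⟫)(⟪α, Y⟫ + ⟪-σα, Y⟫)` positive. A functional that is positive on the generators
of a finitely generated cone vanishes on it only at `0`, and cuts it into compact truncations
`{f ≤ M}`; as `f` is bounded on compact subsets of `𝔞_q`, these give properness of `pr_q`.
-/

def nonnegCombinations {ι E : Type*} [AddCommMonoid E] [Module ℝ E] (s : Finset ι) (v : ι → E) :
    Set E :=
  {x | ∃ c : ι → ℝ, (∀ i, 0 ≤ c i) ∧ x = ∑ i ∈ s, c i • v i}

section Cone

variable {ι E : Type*} {s : Finset ι} {v : ι → E}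

theorem zero_mem_nonnegCombinations [AddCommMonoid E] [Module ℝ E] :
    (0 : E) ∈ nonnegCombinations s v :=
  ⟨0, fun _ => le_rfl, by simp⟩

variable [AddCommGroup E] [Module ℝ E]

theorem eq_zero_of_mem_nonnegCombinations_of_map_eq_zero {f : E →ₗ[ℝ] ℝ}
    (hf : ∀ i ∈ s, 0 < f (v i)) {x : E} (hx : x ∈ nonnegCombinations s v) (hfx : f x = 0) :
    x = 0 := by
  obtain ⟨c, hc, rfl⟩ := hx
  simp only [map_sum, map_smul, smul_eq_mul] at hfx
  have hterms := (Finset.sum_eq_zero_iff_of_nonneg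
    fun i hi => mul_nonneg (hc i) (hf i hi).le).1 hfx
  refine Finset.sum_eq_zero fun i hi => ?_
  rw [(mul_eq_zero.1 (hterms i hi)).resolve_right (hf i hi).ne', zero_smul]

variable [TopologicalSpace E]

theorem nonnegCombinations_inter_le_subset_image_pi [DecidableEq ι] {f : E →L[ℝ] ℝ}
    (hf : ∀ i ∈ s, 0 < f (v i)) (M : ℝ) :
    nonnegCombinations s v ∩ {x | f x ≤ M} ⊆
      (fun c : ι → ℝ => ∑ i ∈ s, c i • v i) ''
        Set.univ.pi fun i => if i ∈ s then Set.Icc 0 (M / f (v i)) else {0} := by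
  rintro _ ⟨⟨c, hc, rfl⟩, hM⟩
  refine ⟨s.piecewise c 0, fun i _ => ?_, Finset.sum_congr rfl fun i hi => by
    rw [s.piecewise_eq_of_mem _ _ hi]⟩
  by_cases hi : i ∈ s
  · simp only [hi, if_true, s.piecewise_eq_of_mem _ _ hi]
    refine ⟨hc i, (le_div_iff₀ (hf i hi)).2 (le_trans ?_ hM)⟩
    simp only [map_sum, map_smul, smul_eq_mul]
    exact Finset.single_le_sum (fun j hj => mul_nonneg (hc j) (hf j hj).le) hi
  · simp [hi]

variable [ContinuousAdd E] [ContinuousSMul ℝ E]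

theorem isCompact_nonnegCombinations_inter_le {f : E →L[ℝ] ℝ} (hf : ∀ i ∈ s, 0 < f (v i))
    (M : ℝ) : IsCompact (nonnegCombinations s v ∩ {x | f x ≤ M}) := by
  classical
  -- Coefficients are indexed by all of `ι`; those outside `s` are pinned to `0` so that `B` is compact.
  set L : (ι → ℝ) → E := fun c => ∑ i ∈ s, c i • v i
  set B : Set (ι → ℝ) := Set.univ.pi fun i => if i ∈ s then Set.Icc 0 (M / f (v i)) else {0}
  have hB : IsCompact B := isCompact_univ_pi fun i => by
    split_ifs
    exacts [isCompact_Icc, isCompact_singleton]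
  have hL : Continuous L := by fun_prop
  have hLB : L '' B ⊆ nonnegCombinations s v := by
    rintro _ ⟨c, hc, rfl⟩
    refine ⟨c, fun i => ?_, rfl⟩
    have hci := hc i (Set.mem_univ i)
    by_cases hi : i ∈ s
    · simp only [hi, if_true] at hci
      exact hci.1
    · simp only [hi, if_false, Set.mem_singleton_iff] at hci
      exact hci.ge
  convert (hB.image hL).inter_right (isClosed_le f.continuous continuous_const) using 1
  exact Set.Subset.antisymm
    (Set.subset_inter (nonnegCombinations_inter_le_subset_image_pi hf M) Set.inter_subset_right)
    (Set.inter_subset_inter_left _ hLB)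

theorem isProperMap_restrict_nonnegCombinations {F : Type*} [TopologicalSpace F] [T2Space F]
    [CompactlyCoherentSpace F] {g : E → F} (hg : Continuous g) (f : E →L[ℝ] ℝ) {φ : F → ℝ}
    (hφ : Continuous φ) (hφg : ∀ x, φ (g x) = f x) (hf : ∀ i ∈ s, 0 < f (v i)) :
    IsProperMap fun x : nonnegCombinations s v => g x := by
  refine isProperMap_iff_isCompact_preimage.2 ⟨hg.comp continuous_subtype_val, fun K hK => ?_⟩
  rw [Topology.IsEmbedding.subtypeVal.isCompact_iff]
  obtain ⟨M, hM⟩ := hK.bddAbove_image hφ.continuousOn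
  convert (isCompact_nonnegCombinations_inter_le hf M).inter_right
    (hK.isClosed.preimage hg) using 1
  refine (Subtype.image_preimage_coe _ (g ⁻¹' K)).trans
    (Set.Subset.antisymm (fun x ⟨hx, hxK⟩ => ⟨⟨hx, ?_⟩, hxK⟩) fun x ⟨⟨hx, _⟩, hxK⟩ => ⟨hx, hxK⟩)
  change f x ≤ M
  rw [← hφg]
  exact hM ⟨g x, hxK, rfl⟩

end Cone

section Involution

variable {E : Type*} [NormedAddCommGroup E] [InnerProductSpace ℝ E] {σ : E ≃ₗᵢ[ℝ] E}

theorem inner_map_left_of_involutive (hσ : Function.Involutive σ) (x y : E) :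
    ⟪σ x, y⟫ = ⟪x, σ y⟫ := by
  rw [σ.inner_map_eq_flip, σ.symm_apply_eq.2 (hσ y).symm]

theorem map_sub_map_self_of_involutive (hσ : Function.Involutive σ) (y : E) :
    σ (y - σ y) = -(y - σ y) := by
  rw [map_sub, hσ, neg_sub]

theorem inner_sub_map_self_left (hσ : Function.Involutive σ) (x y : E) :
    ⟪y - σ y, x⟫ = ⟪x, y⟫ + ⟪-σ x, y⟫ := by
  rw [inner_sub_left, inner_map_left_of_involutive hσ, inner_neg_left, real_inner_comm x y,
    real_inner_comm (σ x) y, sub_eq_add_neg]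

theorem inner_half_sub_map_of_map_eq_neg (hσ : Function.Involutive σ) {z : E} (hz : σ z = -z)
    (x : E) : ⟪z, (1 / 2 : ℝ) • (x - σ x)⟫ = ⟪z, x⟫ := by
  rw [real_inner_smul_right, inner_sub_right, ← inner_map_left_of_involutive hσ, hz,
    inner_neg_left]
  ring

end Involution

theorem stmt_15_general {E : Type*} [NormedAddCommGroup E] [InnerProductSpace ℝ E]
    (σ : E ≃ₗᵢ[ℝ] E) (hσ : ∀ v, σ (σ v) = v)
    (P : Finset E)
    (hreg : ∃ Y : E, ∀ α ∈ P, 0 < ⟪α, Y⟫)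
    (S : Finset E) (hS : ∀ α, α ∈ S ↔ α ∈ P ∧ -σ α ∈ P) :
    ({x : E | ∃ c : E → ℝ, (∀ α, 0 ≤ c α) ∧
        x = ∑ α ∈ S, c α • ((2 / ⟪α, α⟫) • α)} ∩ {x | σ x = x} = {0}) ∧
    IsProperMap (fun x : {x : E | ∃ c : E → ℝ, (∀ α, 0 ≤ c α) ∧
        x = ∑ α ∈ S, c α • ((2 / ⟪α, α⟫) • α)} => (1 / 2 : ℝ) • ((x : E) - σ x)) := by
  obtain ⟨Y, hY⟩ := hreg
  set f := innerSL ℝ (Y - σ Y)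
  have hpos : ∀ α ∈ S, 0 < f ((2 / ⟪α, α⟫) • α) := by
    intro α hα
    obtain ⟨hαP, hσαP⟩ := (hS α).1 hα
    have hα0 : α ≠ 0 := by rintro rfl; simpa using hY 0 hαP
    rw [innerSL_apply_apply, real_inner_smul_right, inner_sub_map_self_left hσ]
    exact mul_pos (div_pos two_pos (real_inner_self_pos.2 hα0)) (add_pos (hY α hαP) (hY _ hσαP))
  have hfq : ∀ x, f ((1 / 2 : ℝ) • (x - σ x)) = f x := fun x =>
    inner_half_sub_map_of_map_eq_neg hσ (map_sub_map_self_of_involutive hσ Y) x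
  refine ⟨Set.Subset.antisymm (fun x ⟨hx, (hσx : σ x = x)⟩ => ?_) ?_,
    isProperMap_restrict_nonnegCombinations (by fun_prop) f f.continuous hfq hpos⟩
  · refine eq_zero_of_mem_nonnegCombinations_of_map_eq_zero (f := f.toLinearMap) hpos hx ?_
    rw [ContinuousLinearMap.coe_coe, ← hfq x, hσx, sub_self, smul_zero, map_zero]
  · rintro _ rfl
    exact ⟨zero_mem_nonnegCombinations, map_zero σ⟩

/-- Let `P` be a positive system `Σ(P)` of roots in a Euclidean space `𝔞 = E`
(identifying roots with vectors via the inner product; `H_α = (2/⟪α,α⟫)α`), and let `σ` be the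
isometric linear involution of `𝔞` induced by the symmetric-space involution, with `𝔞_h` its
`+1` eigenspace and `pr_q : x ↦ (x - σx)/2` the projection onto the `-1` eigenspace `𝔞_q`.
Let `S = Σ(P,σθ) = {α ∈ Σ(P) : -σα ∈ Σ(P)}` and let `Γ = Γ_𝔞(Σ(P,σθ))` be the cone generated
by the `H_α`, `α ∈ S`.  Then `Γ ∩ 𝔞_h = {0}` and, consequently, the restriction of `pr_q`
to `Γ` is a proper map. -/
theorem stmt_15 {E : Type*} [NormedAddCommGroup E] [InnerProductSpace ℝ E]
    [FiniteDimensional ℝ E]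
    (σ : E ≃ₗᵢ[ℝ] E) (hσ : ∀ v, σ (σ v) = v)
    (P : Finset E) (h0 : (0 : E) ∉ P)
    (hreg : ∃ Y : E, ∀ α ∈ P, 0 < ⟪α, Y⟫)
    (S : Finset E) (hS : ∀ α, α ∈ S ↔ α ∈ P ∧ -σ α ∈ P) :
    ({x : E | ∃ c : E → ℝ, (∀ α, 0 ≤ c α) ∧
        x = ∑ α ∈ S, c α • ((2 / ⟪α, α⟫) • α)} ∩ {x | σ x = x} = {0}) ∧
    IsProperMap (fun x : {x : E | ∃ c : E → ℝ, (∀ α, 0 ≤ c α) ∧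
        x = ∑ α ∈ S, c α • ((2 / ⟪α, α⟫) • α)} => (1 / 2 : ℝ) • ((x : E) - σ x)) :=
  stmt_15_general σ hσ P hreg S hS
end
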